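/- arXiv:1907.02800 — 4 statements merged into one kernel-verified Lean document; each statement's English description precedes it below -/
import Mathlib

section
/- The set S₂ is closed under reversal: for every vector s ∈ S₂, the reversed vector r(s) also belongs to S₂. -/
open SimpleGraph Polynomial Matrix

/-- `V` is the 5-dimensional vector space over `GF(3)`. -/
abbrev V : Type := Fin 5 → ZMod 3

/-- The specific parity-check matrix of the ternary Golay code. -/
def H : Matrix (Fin 5) (Fin 11) (ZMod 3) :=
  !![1,1,1,2,2,0,1,0,0,0,0;
     1,1,2,1,0,2,0,1,0,0,0;
     1,2,1,0,1,2,0,0,1,0,0;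
     1,2,0,1,2,1,0,0,0,1,0;
     1,0,2,2,1,1,0,0,0,0,1]

/-- `S₂ = {±x₁, …, ±x₁₁}` where `x₁, …, x₁₁` are the columns of `H`. -/
def S2 : Set V := {v | ∃ j : Fin 11, v = (fun i => H i j) ∨ v = -(fun i => H i j)}

instance : DecidablePred (· ∈ S2) := fun v =>
  decidable_of_iff (∃ j : Fin 11, v = (fun i => H i j) ∨ v = -(fun i => H i j)) Iff.rfl

/-- The reversal map sending `(a,b,c,d,e)` to `(e,d,c,b,a)`. -/
def r (v : V) : V := fun i => v i.rev

/-- The set `S₂` is closed under reversal: for every `s ∈ S₂`,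
the reversed vector `r s` also belongs to `S₂`. -/
theorem S2_closed_under_reversal : ∀ s ∈ S2, r s ∈ S2 := by
  rintro s ⟨j, hj⟩
  have key : ∀ j : Fin 11, r (fun i => H i j) ∈ S2 := by decide
  rcases hj with h | h
  · subst h; exact key j
  · subst h
    obtain ⟨j', hj'⟩ := key j
    refine ⟨j', ?_⟩
    have : r (-(fun i => H i j)) = -(r (fun i => H i j)) := rfl
    rw [this]
    rcases hj' with h' | h'
    · right; rw [h']
    · left; rw [h', neg_neg]
end

section
/- For every vector v ∈ V, the difference v − r(v) does not belong to S₂. (Every such difference has the form (a,b,0,−b,−a), and S₂ contains no nonzero vector of this form.) -/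
open SimpleGraph Polynomial Matrix

/-- For every vector `v ∈ V`, the difference `v - r v` does not belong to `S₂`. -/
theorem sub_reversal_not_mem_S2 : ∀ v : V, v - r v ∉ S2 := by
  intro v hv
  obtain ⟨j, h | h⟩ := hv
  all_goals {
    have h2 : (v - r v) 2 = 0 := by
      have : ((2 : Fin 5).rev) = 2 := by decide
      simp [r, this]
    have h04 : (v - r v) 0 + (v - r v) 4 = 0 := by
      have e0 : ((0 : Fin 5).rev) = 4 := by decide
      have e4 : ((4 : Fin 5).rev) = 0 := by decide
      simp [r, e0, e4]
    have h13 : (v - r v) 1 + (v - r v) 3 = 0 := by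
      have e1 : ((1 : Fin 5).rev) = 3 := by decide
      have e3 : ((3 : Fin 5).rev) = 1 := by decide
      simp [r, e1, e3]
    rw [h] at h2 h04 h13
    fin_cases j <;> revert h2 h04 h13 <;> decide
  }
end

section
/- The reversal map r is an automorphism of the graph Γ = Cay(V,S₂), it has order 2 (r ∘ r = id and r ≠ id), and it interchanges only non-adjacent vertices: for every v ∈ V with r(v) ≠ v, the vertices v and r(v) are not adjacent in Γ. -/
open SimpleGraph Polynomial Matrix

/-- The Berlekamp–Van Lint–Seidel graph `Γ = Cay(V, S₂)`:
`u` is adjacent to `v` iff `u ≠ v` and `u - v ∈ S₂`. -/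
def Γ : SimpleGraph V where
  Adj u v := u ≠ v ∧ u - v ∈ S2
  symm := ⟨by
    rintro u v ⟨hne, j, hj⟩
    refine ⟨hne.symm, j, ?_⟩
    rcases hj with h | h
    · right; rw [← neg_sub, h]
    · left; rw [← neg_sub, h, neg_neg]⟩
  loopless := ⟨fun v h => h.1 rfl⟩

instance : DecidableRel Γ.Adj := fun u v =>
  decidable_of_iff (u ≠ v ∧ u - v ∈ S2) Iff.rfl

/-!
The reversal is linear and permutes the columns of `H` (it fixes `x₁, x₄, x₉` and swaps
`x₂ ↔ x₆`, `x₃ ↔ x₅`, `x₇ ↔ x₁₁`, `x₈ ↔ x₁₀`), so it preserves `S₂` and hence the Cayley graph.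
If `v` were adjacent to `r v`, then `w = v - r v ∈ S₂` would satisfy `r w = -w`; but no column
`x` of `H` has `r x = -x`, and hence no element of `S₂` does either.
-/

lemma r_involutive : Function.Involutive r := fun v => funext fun i => by simp [r]

lemma r_injective : Function.Injective r := r_involutive.injective

lemma r_sub (u v : V) : r (u - v) = r u - r v := rfl

lemma r_neg (v : V) : r (-v) = -r v := rfl

lemma exists_r_col_eq_col (j : Fin 11) : ∃ k, r (fun i => H i j) = fun i => H i k := by
  revert j; decide

lemma r_col_ne_neg_col (j : Fin 11) : r (fun i => H i j) ≠ -fun i => H i j := by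
  revert j; decide

lemma r_mem_S2 {v : V} (hv : v ∈ S2) : r v ∈ S2 := by
  obtain ⟨j, rfl | rfl⟩ := hv <;> obtain ⟨k, hk⟩ := exists_r_col_eq_col j
  · exact ⟨k, .inl hk⟩
  · exact ⟨k, .inr (by rw [r_neg, hk])⟩

lemma r_mem_S2_iff {v : V} : r v ∈ S2 ↔ v ∈ S2 :=
  ⟨fun h => r_involutive v ▸ r_mem_S2 h, r_mem_S2⟩

lemma r_ne_neg_of_mem_S2 {w : V} (hw : w ∈ S2) : r w ≠ -w := by
  obtain ⟨j, rfl | rfl⟩ := hw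
  · exact r_col_ne_neg_col j
  · rw [r_neg, neg_neg, ne_eq, neg_eq_iff_eq_neg]
    exact r_col_ne_neg_col j

lemma Γ_adj_r_iff (u v : V) : Γ.Adj (r u) (r v) ↔ Γ.Adj u v := by
  change r u ≠ r v ∧ r u - r v ∈ S2 ↔ u ≠ v ∧ u - v ∈ S2
  rw [← r_sub, r_mem_S2_iff, r_injective.ne_iff]

lemma r_ne_id : r ≠ id := fun h => by
  have := congrFun (congrFun h (Pi.single 0 1)) 0
  simp [r] at this

lemma not_Γ_adj_r (v : V) : ¬ Γ.Adj v (r v) := fun ⟨_, hS⟩ =>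
  r_ne_neg_of_mem_S2 hS (by rw [r_sub, r_involutive, neg_sub])

/-- The reversal map `r` is an automorphism of `Γ = Cay(V, S₂)` of order 2
that interchanges only non-adjacent vertices. -/
theorem reversal_is_order_two_automorphism_interchanging_only_nonadjacent :
    (∀ u v : V, Γ.Adj (r u) (r v) ↔ Γ.Adj u v) ∧
    (r ∘ r = id) ∧ (r ≠ id) ∧
    (∀ v : V, r v ≠ v → ¬ Γ.Adj v (r v)) :=
  ⟨Γ_adj_r_iff, r_involutive.comp_self, r_ne_id, fun v _ => not_Γ_adj_r v⟩
end

section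
/- The strong product Γ[K₂] is a divisible design graph with respect to the partition of its vertex set into the 243 classes {(v,0),(v,1)} (v ∈ V): it is 45-regular, any two distinct vertices in the same class have exactly 44 common neighbours, and any two vertices in different classes have exactly 4 common neighbours. -/
open SimpleGraph Polynomial Matrix

/-- The strong product `Γ[K₂]` of the Berlekamp–Van Lint–Seidel graph with an edge:
`(u,i)` is adjacent to `(v,j)` iff `(u,i) ≠ (v,j)` and (`u = v` or `u` adjacent to `v` in `Γ`). -/
def ΓK2 : SimpleGraph (V × ZMod 2) where
  Adj p q := p ≠ q ∧ (p.1 = q.1 ∨ Γ.Adj p.1 q.1)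
  symm := ⟨by
    rintro p q ⟨h1, h2⟩
    exact ⟨h1.symm, h2.imp Eq.symm fun h => h.symm⟩⟩
  loopless := ⟨fun p h => h.1 rfl⟩

instance : DecidableRel ΓK2.Adj := fun p q =>
  decidable_of_iff (p ≠ q ∧ (p.1 = q.1 ∨ Γ.Adj p.1 q.1)) Iff.rfl

/-!
`Γ` is a Cayley graph, so the number of common neighbours of `u` and `v` is the number of
`s ∈ S₂` with `s - (u - v) ∈ S₂`; a computation over the 242 nonzero differences shows that `Γ`
is strongly regular with parameters `(243, 22, 1, 2)`. In `Γ[K₂]` the closed neighbourhood of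
`(v, i)` is `N[v] × ZMod 2`, so distinct vertices `p`, `q` have common neighbourhood
`(N[p.1] ∩ N[q.1]) × ZMod 2 \ {p, q}`. Hence the degree is `23 · 2 - 1 = 45`, two vertices of one
class have `23 · 2 - 2 = 44` common neighbours, and two vertices of different classes have
`(1 + 2) · 2 - 2 = 4` or `2 · 2 = 4` of them, according as the classes are adjacent or not.
-/

open Finset

namespace SimpleGraph

variable {α : Type*} (G : SimpleGraph α)

def cliqueBlowup (β : Type*) : SimpleGraph (α × β) where
  Adj p q := p ≠ q ∧ (p.1 = q.1 ∨ G.Adj p.1 q.1)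
  symm := ⟨fun _ _ ⟨hne, h⟩ => ⟨hne.symm, h.imp Eq.symm fun h => h.symm⟩⟩
  loopless := ⟨fun _ h => h.1 rfl⟩

instance [DecidableEq α] {β : Type*} [DecidableEq β] [DecidableRel G.Adj] :
    DecidableRel (G.cliqueBlowup β).Adj := fun p q =>
  decidable_of_iff (p ≠ q ∧ (p.1 = q.1 ∨ G.Adj p.1 q.1)) Iff.rfl

@[simp]
lemma cliqueBlowup_adj {β : Type*} {p q : α × β} :
    (G.cliqueBlowup β).Adj p q ↔ p ≠ q ∧ (p.1 = q.1 ∨ G.Adj p.1 q.1) :=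
  Iff.rfl

variable [Fintype α] [DecidableEq α] [DecidableRel G.Adj]

def closedNeighborFinset (v : α) : Finset α := insert v (G.neighborFinset v)

@[simp]
lemma mem_closedNeighborFinset {v w : α} : w ∈ G.closedNeighborFinset v ↔ v = w ∨ G.Adj v w := by
  simp [closedNeighborFinset, eq_comm]

lemma card_closedNeighborFinset (v : α) : #(G.closedNeighborFinset v) = G.degree v + 1 :=
  card_insert_of_notMem (by simp)

lemma closedNeighborFinset_inter_of_adj {v w : α} (h : G.Adj v w) :
    G.closedNeighborFinset v ∩ G.closedNeighborFinset w =
      (G.commonNeighbors v w).toFinset ∪ {v, w} := by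
  ext u
  simp only [mem_inter, mem_closedNeighborFinset, mem_union, Set.mem_toFinset, mem_commonNeighbors,
    mem_insert, mem_singleton]
  constructor
  · rintro ⟨rfl | hvu, rfl | hwu⟩ <;> tauto
  · rintro (⟨hvu, hwu⟩ | rfl | rfl)
    · tauto
    · exact ⟨.inl rfl, .inr h.symm⟩
    · exact ⟨.inr h, .inl rfl⟩

lemma card_closedNeighborFinset_inter_of_adj {v w : α} (h : G.Adj v w) :
    #(G.closedNeighborFinset v ∩ G.closedNeighborFinset w) =
      Fintype.card (G.commonNeighbors v w) + 2 := by
  rw [closedNeighborFinset_inter_of_adj G h, card_union_of_disjoint, Set.toFinset_card,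
    card_pair h.ne]
  simp [notMem_commonNeighbors_left, notMem_commonNeighbors_right]

lemma closedNeighborFinset_inter_of_not_adj {v w : α} (hne : v ≠ w) (h : ¬G.Adj v w) :
    G.closedNeighborFinset v ∩ G.closedNeighborFinset w = (G.commonNeighbors v w).toFinset := by
  ext u
  simp only [mem_inter, mem_closedNeighborFinset, Set.mem_toFinset, mem_commonNeighbors]
  constructor
  · rintro ⟨rfl | hvu, rfl | hwu⟩
    · exact absurd rfl hne
    · exact absurd hwu.symm h
    · exact absurd hvu h
    · exact ⟨hvu, hwu⟩
  · rintro ⟨hvu, hwu⟩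
    exact ⟨.inr hvu, .inr hwu⟩

variable {β : Type*} [Fintype β] [DecidableEq β]

lemma neighborFinset_cliqueBlowup (p : α × β) :
    (G.cliqueBlowup β).neighborFinset p = (G.closedNeighborFinset p.1 ×ˢ univ).erase p := by
  ext q
  simp [and_comm, ne_comm]

lemma commonNeighbors_cliqueBlowup (p q : α × β) :
    ((G.cliqueBlowup β).commonNeighbors p q).toFinset =
      ((G.closedNeighborFinset p.1 ∩ G.closedNeighborFinset q.1) ×ˢ univ) \ {p, q} := by
  ext r
  simp only [Set.mem_toFinset, mem_commonNeighbors, cliqueBlowup_adj, mem_sdiff, mem_product,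
    mem_inter, mem_closedNeighborFinset, mem_univ, and_true, mem_insert, mem_singleton]
  tauto

lemma degree_cliqueBlowup (p : α × β) :
    (G.cliqueBlowup β).degree p = (G.degree p.1 + 1) * Fintype.card β - 1 := by
  rw [← card_neighborFinset_eq_degree, neighborFinset_cliqueBlowup, card_erase_of_mem (by simp),
    card_product, card_closedNeighborFinset, card_univ]

lemma card_commonNeighbors_cliqueBlowup_of_fst_eq {p q : α × β} (hpq : p ≠ q) (h : p.1 = q.1) :
    Fintype.card ((G.cliqueBlowup β).commonNeighbors p q) =
      (G.degree p.1 + 1) * Fintype.card β - 2 := by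
  rw [← Set.toFinset_card, commonNeighbors_cliqueBlowup, ← h, inter_self, card_sdiff_of_subset,
    card_product, card_closedNeighborFinset, card_univ, card_pair hpq]
  simp [insert_subset_iff, h]

lemma card_commonNeighbors_cliqueBlowup_of_adj {p q : α × β} (h : G.Adj p.1 q.1) :
    Fintype.card ((G.cliqueBlowup β).commonNeighbors p q) =
      (Fintype.card (G.commonNeighbors p.1 q.1) + 2) * Fintype.card β - 2 := by
  have hpq : p ≠ q := fun e => h.ne (congrArg Prod.fst e)
  rw [← Set.toFinset_card, commonNeighbors_cliqueBlowup, card_sdiff_of_subset, card_product,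
    card_closedNeighborFinset_inter_of_adj G h, card_univ, card_pair hpq]
  simp [insert_subset_iff, h, h.symm]

lemma card_commonNeighbors_cliqueBlowup_of_not_adj {p q : α × β} (hne : p.1 ≠ q.1)
    (h : ¬G.Adj p.1 q.1) :
    Fintype.card ((G.cliqueBlowup β).commonNeighbors p q) =
      Fintype.card (G.commonNeighbors p.1 q.1) * Fintype.card β := by
  rw [← Set.toFinset_card, commonNeighbors_cliqueBlowup,
    closedNeighborFinset_inter_of_not_adj G hne h, sdiff_eq_self_of_disjoint, card_product,
    Set.toFinset_card, card_univ]
  simp [notMem_commonNeighbors_left, notMem_commonNeighbors_right]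

end SimpleGraph

section Cayley

variable {A : Type*} [AddCommGroup A] [Fintype A] {G : SimpleGraph A} [DecidableRel G.Adj]
  {S : Finset A}

lemma degree_eq_card_of_adj_iff_sub_mem (hG : ∀ u v, G.Adj u v ↔ u - v ∈ S) (u : A) :
    G.degree u = #S := by
  rw [← card_neighborFinset_eq_degree]
  exact card_equiv (Equiv.subLeft u) fun w => by simp [hG]

lemma card_commonNeighbors_of_adj_iff_sub_mem [DecidableEq A]
    (hG : ∀ u v, G.Adj u v ↔ u - v ∈ S) (u v : A) :
    Fintype.card (G.commonNeighbors u v) = #{s ∈ S | s - (u - v) ∈ S} := by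
  rw [← Set.toFinset_card]
  refine card_equiv (Equiv.subLeft u) fun w => ?_
  simp only [Set.mem_toFinset, mem_commonNeighbors, hG, mem_filter, Equiv.subLeft_apply,
    sub_sub_sub_cancel_left]

end Cayley

def code : V ≃ Fin 243 := finFunctionFinEquiv

/-- The codes `∑ i, vᵢ 3ⁱ` of the 22 vectors `±xⱼ`. -/
def S2codes : Finset (Fin 243) :=
  {121, 242, 76, 44, 178, 104, 194, 142, 146, 208, 132, 228, 1, 2, 3, 6, 9, 18, 27, 54, 81, 162}

lemma mem_S2_iff_code_mem : ∀ v : V, v ∈ S2 ↔ code v ∈ S2codes := by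
  rw [← code.symm.forall_congr_right]
  decide +kernel

lemma zero_notMem_S2 : (0 : V) ∉ S2 := by decide

def S2finset : Finset V := S2codes.map code.symm.toEmbedding

lemma mem_S2finset_iff_code_mem {v : V} : v ∈ S2finset ↔ code v ∈ S2codes := by
  simp [S2finset]

lemma Γ_adj_iff_sub_mem (u v : V) : Γ.Adj u v ↔ u - v ∈ S2finset := by
  rw [mem_S2finset_iff_code_mem, ← mem_S2_iff_code_mem]
  refine ⟨And.right, fun h => ⟨fun huv => ?_, h⟩⟩
  rw [huv, sub_self] at h
  exact zero_notMem_S2 h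

lemma card_filter_sub_mem_S2finset :
    ∀ d : V, d ≠ 0 → #{s ∈ S2finset | s - d ∈ S2finset} = if d ∈ S2finset then 1 else 2 := by
  -- the kernel compares codes in `Fin 243` much faster than functions `Fin 5 → ZMod 3`
  simp only [mem_S2finset_iff_code_mem]
  simp only [S2finset, filter_map, card_map]
  rw [← code.symm.forall_congr_right]
  simp only [Function.comp_def, Equiv.coe_toEmbedding, Equiv.apply_symm_apply]
  decide +kernel

theorem Γ_isSRGWith : Γ.IsSRGWith 243 22 1 2 where
  card := by simp
  regular u := (degree_eq_card_of_adj_iff_sub_mem Γ_adj_iff_sub_mem u).trans rfl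
  of_adj u v h := by
    rw [card_commonNeighbors_of_adj_iff_sub_mem Γ_adj_iff_sub_mem,
      card_filter_sub_mem_S2finset _ (sub_ne_zero.2 h.ne), if_pos ((Γ_adj_iff_sub_mem u v).1 h)]
  of_not_adj u v hne h := by
    rw [card_commonNeighbors_of_adj_iff_sub_mem Γ_adj_iff_sub_mem,
      card_filter_sub_mem_S2finset _ (sub_ne_zero.2 hne), if_neg (mt (Γ_adj_iff_sub_mem u v).2 h)]

/-- `Γ[K₂]` is a divisible design graph with respect to the partition into the 243 classes
`{(v,0), (v,1)}`: it is 45-regular, two distinct vertices in the same class have exactly 44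
common neighbours, and two vertices in different classes have exactly 4 common neighbours. -/
theorem strong_product_is_divisible_design :
    ΓK2.IsRegularOfDegree 45 ∧
    (∀ (v : V) (i j : ZMod 2), i ≠ j →
      Fintype.card (ΓK2.commonNeighbors (v, i) (v, j)) = 44) ∧
    (∀ (u v : V) (i j : ZMod 2), u ≠ v →
      Fintype.card (ΓK2.commonNeighbors (u, i) (v, j)) = 4) := by
  have hΓ := Γ_isSRGWith
  -- `ΓK2` is `Γ.cliqueBlowup (ZMod 2)` by definition
  refine ⟨fun p => ?_, fun v i j hij => ?_, fun u v i j huv => ?_⟩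
  · exact (Γ.degree_cliqueBlowup p).trans (by rw [hΓ.regular]; rfl)
  · refine (Γ.card_commonNeighbors_cliqueBlowup_of_fst_eq (p := (v, i)) (q := (v, j))
      (fun h => hij (congrArg Prod.snd h)) rfl).trans ?_
    rw [hΓ.regular]; rfl
  · by_cases hadj : Γ.Adj u v
    · refine (Γ.card_commonNeighbors_cliqueBlowup_of_adj (β := ZMod 2) hadj).trans ?_
      rw [hΓ.of_adj u v hadj]; rfl
    · refine (Γ.card_commonNeighbors_cliqueBlowup_of_not_adj (β := ZMod 2) huv hadj).trans ?_
      rw [hΓ.of_not_adj huv hadj]; rfl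
end
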